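/- Let λ > 0 and let b_Dir be the indicator function of the irrationals. Define f : ℝ → ℝ by f(y) = −λ y + min(λ y, 1) + b_Dir(y). Then for every x ∈ ℝ with |x| < 1/λ there exist τ > 0 and infinitely many continuous functions X : [0,τ] → ℝ satisfying X(t) = x + ∫₀ᵗ f(X(s)) ds for all t ∈ [0,τ]. (Every solution stays in {|y| < 1/λ} for a short time, where f(y) = b_Dir(y), so the wild non-uniqueness of the Dirichlet-drift ODE applies.) -/

import Mathlib

/-!
Below the level `1/λ` the drift `-λy + min (λy) 1 + bDir y` equals `bDir y`. A path may move at
unit speed from `x` to a rational level `q ∈ (x, 1/λ)`, rest there for an arbitrary time `c`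
(the drift vanishes at rationals), and then move on at unit speed. Its derivative equals
`bDir` of its value except at the two corners and at the countably many times when it passes
a rational level while moving, which is invisible to the integral. Distinct `c` give distinct
solutions.
-/

open MeasureTheory intervalIntegral

/-- The Dirichlet function: indicator of the irrationals. -/
noncomputable def bDir : ℝ → ℝ := Set.indicator {x : ℝ | Irrational x} 1

open Set

lemma bDir_of_irrational {y : ℝ} (h : Irrational y) : bDir y = 1 :=
  indicator_of_mem h _

lemma bDir_ratCast (q : ℚ) : bDir q = 0 :=
  indicator_of_notMem (Rat.not_irrational q) _

lemma norm_bDir_le_one (y : ℝ) : ‖bDir y‖ ≤ 1 := by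
  by_cases h : Irrational y <;> simp [bDir, h]

lemma measurable_bDir : Measurable bDir := by
  have hirr : {y : ℝ | Irrational y} = (range ((↑) : ℚ → ℝ))ᶜ := by
    ext y; simp [Irrational]
  refine measurable_one.indicator ?_
  rw [hirr]
  exact (countable_range _).measurableSet.compl

noncomputable def pausePath (x t₀ c s : ℝ) : ℝ := x + min s t₀ + max (s - (t₀ + c)) 0

section pausePath

variable {x t₀ c s : ℝ}

@[fun_prop]
lemma continuous_pausePath : Continuous (pausePath x t₀ c) := by
  unfold pausePath; fun_prop

lemma pausePath_of_le_left (hc : 0 ≤ c) (h : s ≤ t₀) : pausePath x t₀ c s = x + s := by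
  rw [pausePath, min_eq_left h, max_eq_right (by linarith)]; ring

lemma pausePath_of_mem_Icc (h : s ∈ Icc t₀ (t₀ + c)) : pausePath x t₀ c s = x + t₀ := by
  rw [pausePath, min_eq_right h.1, max_eq_right (by linarith [h.2])]; ring

lemma pausePath_of_right_le (hc : 0 ≤ c) (h : t₀ + c ≤ s) :
    pausePath x t₀ c s = x + s - c := by
  rw [pausePath, min_eq_right (by linarith), max_eq_left (by linarith)]; ring

lemma pausePath_le (hc : 0 ≤ c) : pausePath x t₀ c s ≤ x + s := by
  rcases le_total s t₀ with h | h
  · exact (pausePath_of_le_left hc h).le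
  rcases le_total s (t₀ + c) with h' | h'
  · rw [pausePath_of_mem_Icc ⟨h, h'⟩]; linarith
  · rw [pausePath_of_right_le hc h']; linarith

lemma hasDerivAt_pausePath_of_lt (hc : 0 ≤ c) (h : s < t₀) :
    HasDerivAt (pausePath x t₀ c) 1 s :=
  ((hasDerivAt_id s).const_add x).congr_of_eventuallyEq <|
    Filter.eventually_of_mem (Iio_mem_nhds h) fun _ hu => pausePath_of_le_left hc (le_of_lt hu)

lemma hasDerivAt_pausePath_of_mem_Ioo (h : s ∈ Ioo t₀ (t₀ + c)) :
    HasDerivAt (pausePath x t₀ c) 0 s :=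
  (hasDerivAt_const s (x + t₀)).congr_of_eventuallyEq <|
    Filter.eventually_of_mem (Ioo_mem_nhds h.1 h.2) fun _ hu =>
      pausePath_of_mem_Icc (Ioo_subset_Icc_self hu)

lemma hasDerivAt_pausePath_of_gt (hc : 0 ≤ c) (h : t₀ + c < s) :
    HasDerivAt (pausePath x t₀ c) 1 s := by
  have hd : HasDerivAt (fun u => x + u - c) 1 s := ((hasDerivAt_id s).const_add x).sub_const c
  exact hd.congr_of_eventuallyEq <|
    Filter.eventually_of_mem (Ioi_mem_nhds h) fun _ hu => pausePath_of_right_le hc (le_of_lt hu)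

lemma hasDerivAt_pausePath_bDir {q : ℚ} (hq : x + t₀ = q) (hc : 0 ≤ c)
    (hs : s ∉ ({t₀, t₀ + c} ∪ range (fun r : ℚ => r - x) ∪ range (fun r : ℚ => r - x + c))) :
    HasDerivAt (pausePath x t₀ c) (bDir (pausePath x t₀ c s)) s := by
  simp only [mem_union, mem_insert_iff, mem_singleton_iff, mem_range, not_or] at hs
  obtain ⟨⟨⟨hst₀, hst₀c⟩, hleft⟩, hright⟩ := hs
  rcases lt_or_gt_of_ne hst₀ with h | h
  · have hirr : Irrational (x + s) := fun ⟨r, hr⟩ => hleft ⟨r, by linarith⟩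
    rw [pausePath_of_le_left hc h.le, bDir_of_irrational hirr]
    exact hasDerivAt_pausePath_of_lt hc h
  rcases lt_or_gt_of_ne hst₀c with h' | h'
  · rw [pausePath_of_mem_Icc ⟨h.le, h'.le⟩, hq, bDir_ratCast]
    exact hasDerivAt_pausePath_of_mem_Ioo ⟨h, h'⟩
  · have hirr : Irrational (x + s - c) := fun ⟨r, hr⟩ => hright ⟨r, by linarith⟩
    rw [pausePath_of_right_le hc h'.le, bDir_of_irrational hirr]
    exact hasDerivAt_pausePath_of_gt hc h'

lemma pausePath_eq_add_integral_bDir {q : ℚ} (hq : x + t₀ = q) (ht₀ : 0 ≤ t₀) (hc : 0 ≤ c)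
    {t : ℝ} (ht : 0 ≤ t) :
    pausePath x t₀ c t = x + ∫ s in (0 : ℝ)..t, bDir (pausePath x t₀ c s) := by
  have hcount : ({t₀, t₀ + c} ∪ range (fun r : ℚ => (r : ℝ) - x) ∪
      range (fun r : ℚ => (r : ℝ) - x + c)).Countable :=
    (((countable_singleton _).insert _).union (countable_range _)).union (countable_range _)
  have hint : IntervalIntegrable (fun s => bDir (pausePath x t₀ c s)) volume 0 t := by
    refine (intervalIntegrable_const (c := (1 : ℝ))).mono_fun
      (measurable_bDir.comp continuous_pausePath.measurable).aestronglyMeasurable ?_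
    exact Filter.Eventually.of_forall fun s => (norm_bDir_le_one _).trans_eq norm_one.symm
  rw [integral_eq_of_hasDerivAt_off_countable_of_le _ _ ht hcount
    continuous_pausePath.continuousOn (fun s hs => hasDerivAt_pausePath_bDir hq hc hs.2) hint,
    pausePath_of_le_left hc ht₀]
  ring

end pausePath

lemma drift_eq_bDir {lam y : ℝ} (hy : lam * y ≤ 1) :
    -lam * y + min (lam * y) 1 + bDir y = bDir y := by
  rw [min_eq_left hy]; ring

lemma pausePath_eq_add_integral_drift {lam x t₀ c t : ℝ} {q : ℚ} (hlam : 0 < lam)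
    (hq : x + t₀ = q) (ht₀ : 0 ≤ t₀) (hc : 0 ≤ c) (ht : t ∈ Icc 0 (1 / lam - x)) :
    pausePath x t₀ c t = x + ∫ s in (0 : ℝ)..t,
      (-lam * pausePath x t₀ c s + min (lam * pausePath x t₀ c s) 1
        + bDir (pausePath x t₀ c s)) := by
  rw [pausePath_eq_add_integral_bDir hq ht₀ hc ht.1]
  congr 1
  refine integral_congr fun s hs => (drift_eq_bDir ?_).symm
  rw [uIcc_of_le ht.1] at hs
  calc lam * pausePath x t₀ c s ≤ lam * (1 / lam) := by
        gcongr; linarith [pausePath_le (x := x) (t₀ := t₀) (s := s) hc, hs.2, ht.2]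
    _ = 1 := by field_simp

/-- Let `λ > 0` and `f y = -λ y + min (λ y) 1 + bDir y`. For every `x` with `|x| < 1/λ`
there exist `τ > 0` and infinitely many continuous functions `X : [0,τ] → ℝ` satisfying
`X t = x + ∫₀ᵗ f (X s) ds` on `[0,τ]` (solutions identified with their restrictions). -/
theorem stmt9 (lam : ℝ) (hlam : 0 < lam) (x : ℝ) (hx : |x| < 1 / lam) :
    ∃ τ : ℝ, 0 < τ ∧
      {g : Set.Icc (0:ℝ) τ → ℝ | ∃ X : ℝ → ℝ,
        ContinuousOn X (Set.Icc (0:ℝ) τ) ∧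
        (∀ t ∈ Set.Icc (0:ℝ) τ,
          X t = x + ∫ s in (0:ℝ)..t,
            (-lam * X s + min (lam * X s) 1 + bDir (X s))) ∧
        g = (Set.Icc (0:ℝ) τ).restrict X}.Infinite := by
  obtain ⟨q, hxq, hq⟩ := exists_rat_btwn (abs_lt.mp hx).2
  set τ := 1 / lam - x with hτ_def
  set t₀ := (q : ℝ) - x with ht₀_def
  let sol (c : ℝ) : Icc 0 τ → ℝ := (Icc 0 τ).domRestrict (pausePath x t₀ c)
  have hinj : InjOn sol (Ioo 0 (τ - t₀)) := fun c hc c' hc' h => by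
    have := congrFun h ⟨τ, by linarith, le_rfl⟩
    change pausePath x t₀ c τ = pausePath x t₀ c' τ at this
    rw [pausePath_of_right_le hc.1.le (by linarith [hc.2]),
      pausePath_of_right_le hc'.1.le (by linarith [hc'.2])] at this
    linarith
  refine ⟨τ, by linarith, ((Ioo_infinite (by linarith)).image hinj).mono ?_⟩
  rintro _ ⟨c, hc, rfl⟩
  exact ⟨_, continuous_pausePath.continuousOn, fun t ht =>
    pausePath_eq_add_integral_drift hlam (by ring) (by linarith) hc.1.le ht, rfl⟩
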